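/- Let R be a finite index set and let (L_r)_{r∈R} be mutually independent nonnegative real-valued random variables on a common probability space with 0 ≤ L_r ≤ m_r·n_r almost surely, where n_r are natural numbers and m_r are constants with 0 < m_r ≤ d for a constant d > 0. Suppose E[∑_{r∈R} L_r] ≤ 2·d and set Δ_E := ∑_{r∈R} n_r². Then for every real n ≥ 1, P( ∑_{r∈R} L_r ≥ (2 + √((3/2)·(log n)·Δ_E))·d ) ≤ n^{−2}. -/

import Mathlib

open MeasureTheory ProbabilityTheory

/-!
The centred loads `L r - 𝔼[L r]` are independent and, by Hoeffding's lemma, sub-Gaussian with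
parameter `(d n_r)² / 4`, since `0 ≤ L r ≤ m_r n_r ≤ d n_r`. As `𝔼[∑ L r] ≤ 2d`, exceeding
`(2 + T) d` forces the centred sum to exceed `T d`, and Hoeffding's inequality bounds this by
`exp (-2 (T d)² / (d² Δ_E)) = n⁻³ ≤ n⁻²` for `T = √((3/2) (log n) Δ_E)`. If `Δ_E = 0`, all loads
vanish almost surely and the event is null.
-/

open Real in
theorem measureReal_sum_ge_le_of_iIndepFun_of_mem_Icc {Ω ι : Type*} [MeasurableSpace Ω]
    {μ : Measure Ω} [IsProbabilityMeasure μ] {X : ι → Ω → ℝ} {s : Finset ι} {a b : ι → ℝ}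
    (h_indep : iIndepFun X μ) (h_meas : ∀ i ∈ s, AEMeasurable (X i) μ)
    (h_bdd : ∀ i ∈ s, ∀ᵐ ω ∂μ, X i ω ∈ Set.Icc (a i) (b i)) {ε : ℝ} (hε : 0 ≤ ε) :
    μ.real {ω | ∑ i ∈ s, μ[X i] + ε ≤ ∑ i ∈ s, X i ω}
      ≤ exp (-2 * ε ^ 2 / ∑ i ∈ s, (b i - a i) ^ 2) := by
  have h_indep_centred : iIndepFun (fun i ω ↦ X i ω - μ[X i]) μ :=
    h_indep.comp (fun i y ↦ y - ∫ ω, X i ω ∂μ) fun _ ↦ measurable_sub_const _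
  have h := HasSubgaussianMGF.measure_sum_ge_le_of_iIndepFun h_indep_centred
    (fun i hi ↦ hasSubgaussianMGF_of_mem_Icc (h_meas i hi) (h_bdd i hi)) hε
  have h_set : {ω | ∑ i ∈ s, μ[X i] + ε ≤ ∑ i ∈ s, X i ω}
      = {ω | ε ≤ ∑ i ∈ s, (X i ω - μ[X i])} := by
    simp only [Finset.sum_sub_distrib, le_sub_iff_add_le']
  have h_param : ((∑ i ∈ s, (‖b i - a i‖₊ / 2) ^ 2 : NNReal) : ℝ)
      = (∑ i ∈ s, (b i - a i) ^ 2) / 4 := by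
    push_cast [Real.norm_eq_abs, sq_abs, div_pow, Finset.sum_div]
    norm_num
  rw [h_set]
  refine h.trans_eq ?_
  rw [h_param]
  congr 1
  ring

theorem measure_sum_ge_eq_zero_of_ae_nonpos {Ω ι : Type*} [MeasurableSpace Ω] {μ : Measure Ω}
    {X : ι → Ω → ℝ} {s : Finset ι} (h : ∀ i ∈ s, ∀ᵐ ω ∂μ, X i ω ≤ 0) {t : ℝ}
    (ht : 0 < t) : μ {ω | t ≤ ∑ i ∈ s, X i ω} = 0 := by
  rw [measure_eq_zero_iff_ae_notMem]
  filter_upwards [(Filter.eventually_all_finset s).2 h] with ω hω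
  exact not_le.2 ((Finset.sum_nonpos hω).trans_lt ht)

open Real in
theorem exp_neg_two_mul_sq_div_eq_rpow_neg_three {n Δ d : ℝ} (hn : 1 ≤ n) (hΔ : 0 < Δ)
    (hd : 0 < d) : exp (-2 * (√(3 / 2 * log n * Δ) * d) ^ 2 / (d ^ 2 * Δ)) = n ^ (-3 : ℝ) := by
  rw [mul_pow, sq_sqrt (by have := log_nonneg hn; positivity), rpow_def_of_pos (by linarith)]
  congr 1
  field_simp

open Real in
/-- Edge capacity violation bound in the cost-minimization variant: independent loads
`L r ∈ [0, m r * n r]`, single-demand bounds `m r ≤ d`, expected total load at most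
`2 d`.  With `Δ_E = ∑ (n r)²`, the probability of exceeding
`(2 + √((3/2) (log n) Δ_E)) d` is at most `n⁻²`. -/
theorem edge_capacity_violation_cost {Ω : Type*} [MeasurableSpace Ω] (μ : Measure Ω)
    [IsProbabilityMeasure μ]
    {R : Type*} [Fintype R] (L : R → Ω → ℝ) (m : R → ℝ) (nE : R → ℕ) (d : ℝ)
    (hmeas : ∀ r, Measurable (L r))
    (hindep : iIndepFun L μ)
    (hbdd : ∀ r, ∀ᵐ ω ∂μ, 0 ≤ L r ω ∧ L r ω ≤ m r * (nE r : ℝ))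
    (hd : 0 < d)
    (hm : ∀ r, 0 < m r ∧ m r ≤ d)
    (hE : ∫ ω, ∑ r, L r ω ∂μ ≤ 2 * d) :
    ∀ n : ℝ, 1 ≤ n →
      μ {ω | (2 + Real.sqrt ((3 / 2) * Real.log n * ∑ r, ((nE r : ℝ)) ^ 2)) * d ≤ ∑ r, L r ω}
        ≤ ENNReal.ofReal (n ^ (-2 : ℝ)) := by
  intro n hn
  set Δ := ∑ r, ((nE r : ℝ)) ^ 2
  set T := √((3 / 2) * log n * Δ)
  have h_Icc : ∀ r, ∀ᵐ ω ∂μ, L r ω ∈ Set.Icc 0 (d * nE r) := fun r ↦ by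
    filter_upwards [hbdd r] with ω ⟨h0, h1⟩
    exact ⟨h0, h1.trans (mul_le_mul_of_nonneg_right (hm r).2 (Nat.cast_nonneg _))⟩
  rcases (show 0 ≤ Δ from Finset.sum_nonneg fun r _ ↦ sq_nonneg _).eq_or_lt with hΔ0 | hΔ0
  · have h_zero : ∀ r, nE r = 0 := by
      simpa [Δ, Finset.sum_eq_zero_iff_of_nonneg, sq_nonneg] using hΔ0.symm
    refine (measure_sum_ge_eq_zero_of_ae_nonpos (fun r _ ↦ ?_) (by positivity)).trans_le zero_le
    filter_upwards [h_Icc r] with ω hω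
    simpa [h_zero] using hω.2
  have h_mean : ∑ r, μ[L r] ≤ 2 * d := by
    rwa [← integral_finsetSum _ fun r _ ↦
      Integrable.of_mem_Icc _ _ (hmeas r).aemeasurable (h_Icc r)]
  have h_sub : {ω | (2 + T) * d ≤ ∑ r, L r ω} ⊆ {ω | ∑ r, μ[L r] + T * d ≤ ∑ r, L r ω} :=
    Set.ofPred_subset_ofPred.2 fun ω hω ↦ by linarith
  have h_tail := measureReal_sum_ge_le_of_iIndepFun_of_mem_Icc (s := Finset.univ) hindep
    (fun r _ ↦ (hmeas r).aemeasurable) (fun r _ ↦ h_Icc r) (ε := T * d) (by positivity)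
  have h_var : ∑ r, (d * nE r - 0) ^ 2 = d ^ 2 * Δ := by
    simp only [sub_zero, mul_pow, ← Finset.mul_sum, Δ]
  rw [← ofReal_measureReal (measure_ne_top μ _)]
  refine ENNReal.ofReal_le_ofReal ?_
  calc μ.real _ ≤ μ.real {ω | ∑ r, μ[L r] + T * d ≤ ∑ r, L r ω} := measureReal_mono h_sub
    _ ≤ n ^ (-3 : ℝ) := h_tail.trans_eq <| by
      rw [h_var, exp_neg_two_mul_sq_div_eq_rpow_neg_three hn hΔ0 hd]
    _ ≤ n ^ (-2 : ℝ) := rpow_le_rpow_of_exponent_le hn (by norm_num)
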